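/- With H₀, A₀, H = H₀ ⊕ H₀, and Π = [[I, -(I-A₀)^{1/2}],[(I-A₀)^{1/2}, -I]] as above (0 ≤ A₀ ≤ I, ker A₀ = 0), the operator Π has dense range in H. -/

import Mathlib

noncomputable section

/-- The 2×2 block operator `[[a, b], [c, d]]` acting on the Hilbert space direct
sum `H ⊕ H` (modelled as `WithLp 2 (H × H)`). -/
def blk {H : Type*} [NormedAddCommGroup H] [InnerProductSpace ℂ H] [CompleteSpace H]
    (a b c d : H →L[ℂ] H) : WithLp 2 (H × H) →L[ℂ] WithLp 2 (H × H) :=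
  ((WithLp.prodContinuousLinearEquiv 2 ℂ H H).symm.toContinuousLinearMap).comp
    ((((a.comp (ContinuousLinearMap.fst ℂ H H)) + (b.comp (ContinuousLinearMap.snd ℂ H H))).prod
      ((c.comp (ContinuousLinearMap.fst ℂ H H)) + (d.comp (ContinuousLinearMap.snd ℂ H H)))).comp
      (WithLp.prodContinuousLinearEquiv 2 ℂ H H).toContinuousLinearMap)


/-!
The Frobenius–Schur factorization
`[[1, b], [c, d]] = [[1, 0], [c, 1]] · [[1, 0], [0, d - c b]] · [[1, b], [0, 1]]`
has invertible unitriangular outer factors, so `[[1, b], [c, d]]` has dense range as soon as its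
Schur complement `d - c b` does. For `Π` the Schur complement is `-1 + R² = -A₀`, which has dense
range because it is selfadjoint and injective: the orthogonal complement of the range of an
operator is the kernel of its adjoint.
-/

open ContinuousLinearMap

theorem ContinuousLinearMap.denseRange_of_injective_adjoint {𝕜 E F : Type*} [RCLike 𝕜]
    [NormedAddCommGroup E] [InnerProductSpace 𝕜 E] [CompleteSpace E]
    [NormedAddCommGroup F] [InnerProductSpace 𝕜 F] [CompleteSpace F]
    (T : E →L[𝕜] F) (h : Function.Injective (adjoint T)) : DenseRange T := by
  have hclosure := (adjoint T).orthogonal_ker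
  rw [adjoint_adjoint, LinearMap.ker_eq_bot_of_injective h,
    Submodule.bot_orthogonal_eq_top] at hclosure
  show Dense ((T : E →ₗ[𝕜] F).range : Set F)
  exact Submodule.dense_iff_topologicalClosure_eq_top.2 hclosure.symm

theorem cfc_sqrt_one_sub_mul_self {A : Type*} [CStarAlgebra A] [PartialOrder A]
    [StarOrderedRing A] {a : A} (ha : IsSelfAdjoint a) (h1 : a ≤ 1) :
    cfc (fun t : ℝ => Real.sqrt (1 - t)) a * cfc (fun t : ℝ => Real.sqrt (1 - t)) a = 1 - a := by
  have hspec := (CFC.le_one_iff (R := ℝ) a).mp h1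
  calc _ = cfc (fun t : ℝ => Real.sqrt (1 - t) * Real.sqrt (1 - t)) a := (cfc_mul _ _ a).symm
    _ = cfc (fun t : ℝ => 1 - t) a :=
      cfc_congr fun t ht => Real.mul_self_sqrt (sub_nonneg.2 (hspec t ht))
    _ = 1 - a := by rw [cfc_sub _ _ a, cfc_const_one ℝ a, cfc_id' ℝ a]

section BlockOperator

variable {H : Type*} [NormedAddCommGroup H] [InnerProductSpace ℂ H] [CompleteSpace H]

@[simp]
lemma blk_apply_fst (a b c d : H →L[ℂ] H) (p : WithLp 2 (H × H)) :
    (blk a b c d p).fst = a p.fst + b p.snd := rfl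

@[simp]
lemma blk_apply_snd (a b c d : H →L[ℂ] H) (p : WithLp 2 (H × H)) :
    (blk a b c d p).snd = c p.fst + d p.snd := rfl

lemma blk_comp_blk (a b c d a' b' c' d' : H →L[ℂ] H) :
    (blk a b c d).comp (blk a' b' c' d') =
      blk (a * a' + b * c') (a * b' + b * d') (c * a' + d * c') (c * b' + d * d') := by
  ext p : 1
  refine (WithLp.ext_iff _).2 (Prod.ext ?_ ?_) <;>
    simp only [comp_apply, WithLp.ofLp_fst, WithLp.ofLp_snd, blk_apply_fst, blk_apply_snd,
      map_add, add_apply, mul_apply_eq_comp] <;>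
    abel

lemma blk_one_zero_zero_one : blk (1 : H →L[ℂ] H) 0 0 1 = 1 := by
  ext p : 1
  refine (WithLp.ext_iff _).2 (Prod.ext ?_ ?_) <;> simp

lemma surjective_blk_one_of_comp_eq_one {b c b' c' : H →L[ℂ] H}
    (h : (blk 1 b c 1).comp (blk 1 b' c' 1) = 1) : Function.Surjective (blk 1 b c 1) :=
  fun p => ⟨blk 1 b' c' 1 p, by rw [← comp_apply, h, one_apply_eq_self]⟩

lemma surjective_blk_lower_unitriangular (c : H →L[ℂ] H) : Function.Surjective (blk 1 0 c 1) :=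
  surjective_blk_one_of_comp_eq_one (b' := 0) (c' := -c) (by
    rw [blk_comp_blk, ← blk_one_zero_zero_one]; congr 1 <;> noncomm_ring)

lemma surjective_blk_upper_unitriangular (b : H →L[ℂ] H) : Function.Surjective (blk 1 b 0 1) :=
  surjective_blk_one_of_comp_eq_one (b' := -b) (c' := 0) (by
    rw [blk_comp_blk, ← blk_one_zero_zero_one]; congr 1 <;> noncomm_ring)

lemma denseRange_blk_diag {a d : H →L[ℂ] H} (ha : DenseRange a) (hd : DenseRange d) :
    DenseRange (blk a 0 0 d) := by
  have hfactor : ⇑(blk a 0 0 d) = WithLp.toLp 2 ∘ Prod.map a d ∘ WithLp.ofLp := by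
    funext p
    refine (WithLp.ext_iff _).2 (Prod.ext ?_ ?_) <;> simp
  rw [hfactor]
  refine (WithLp.toLp_surjective 2).denseRange.comp ?_ (WithLp.prod_continuous_toLp 2 H H)
  exact (ha.prodMap hd).comp (WithLp.ofLp_surjective 2).denseRange (by fun_prop)

lemma blk_one_eq_frobeniusSchur (b c d : H →L[ℂ] H) :
    blk 1 b c d = (blk 1 0 c 1).comp ((blk 1 0 0 (d - c * b)).comp (blk 1 b 0 1)) := by
  rw [blk_comp_blk, blk_comp_blk]; congr 1 <;> noncomm_ring

theorem denseRange_blk_one_of_denseRange_sub_mul {b c d : H →L[ℂ] H}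
    (h : DenseRange (d - c * b)) : DenseRange (blk 1 b c d) := by
  rw [blk_one_eq_frobeniusSchur]
  refine (surjective_blk_lower_unitriangular c).denseRange.comp ?_ (blk 1 0 c 1).continuous
  exact (denseRange_blk_diag denseRange_id h).comp
    (surjective_blk_upper_unitriangular b).denseRange (blk 1 0 0 (d - c * b)).continuous

end BlockOperator

theorem pi_denseRange_general {H₀ : Type*} [NormedAddCommGroup H₀]
    [InnerProductSpace ℂ H₀] [CompleteSpace H₀] (A₀ : H₀ →L[ℂ] H₀)
    (hsa : IsSelfAdjoint A₀) (h1 : A₀ ≤ 1)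
    (hker : ∀ x : H₀, A₀ x = 0 → x = 0) :
    DenseRange ⇑(blk 1 (-(cfc (fun t : ℝ => Real.sqrt (1 - t)) A₀))
      (cfc (fun t : ℝ => Real.sqrt (1 - t)) A₀) (-1)) := by
  refine denseRange_blk_one_of_denseRange_sub_mul ?_
  have hschur : -1 - cfc (fun t : ℝ => Real.sqrt (1 - t)) A₀ *
      -cfc (fun t : ℝ => Real.sqrt (1 - t)) A₀ = -A₀ := by
    rw [mul_neg, sub_neg_eq_add, cfc_sqrt_one_sub_mul_self hsa h1]
    abel
  rw [hschur]
  refine (-A₀).denseRange_of_injective_adjoint ?_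
  rw [hsa.neg.adjoint_eq]
  exact (injective_iff_map_eq_zero (-A₀)).2 fun x hx => hker x (neg_eq_zero.1 hx)

/-- With `A₀` selfadjoint, `0 ≤ A₀ ≤ I` and `ker A₀ = 0`, and `R = (I - A₀)^{1/2}`,
the block operator `Π = [[I, -R],[R, -I]]` has dense range in `H₀ ⊕ H₀`. -/
theorem pi_denseRange {H₀ : Type*} [NormedAddCommGroup H₀]
    [InnerProductSpace ℂ H₀] [CompleteSpace H₀] (A₀ : H₀ →L[ℂ] H₀)
    (hsa : IsSelfAdjoint A₀) (h0 : 0 ≤ A₀) (h1 : A₀ ≤ 1)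
    (hker : ∀ x : H₀, A₀ x = 0 → x = 0) :
    DenseRange ⇑(blk 1 (-(cfc (fun t : ℝ => Real.sqrt (1 - t)) A₀))
      (cfc (fun t : ℝ => Real.sqrt (1 - t)) A₀) (-1)) :=
  pi_denseRange_general A₀ hsa h1 hker

end
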